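/- Define Ŵ : ℝ³ → ℝ by Ŵ(h₁, h₂, h₃) = ½(e^{h₁} − e^{h₂+h₃})² + ½(e^{h₂} − e^{h₁+h₃})² + ½(e^{h₃} − e^{h₁+h₂})². Then for all h₁, h₂ ∈ ℝ the identity Ŵ(h₁, h₂, −h₁−h₂) = 2·sinh²(h₁) + 2·sinh²(h₂) + 2·sinh²(h₁ + h₂) holds, and the function (h₁, h₂) ↦ 2·sinh²(h₁) + 2·sinh²(h₂) + 2·sinh²(h₁ + h₂) is strictly convex on ℝ². -/

import Mathlib

/-- The strain energy `W(F) = ½(λ₁ - λ₂λ₃)² + ½(λ₂ - λ₁λ₃)² + ½(λ₃ - λ₁λ₂)²` expressed in the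
logarithmic principal stretches `hₖ = log λₖ`. -/
noncomputable def WhatMielke (h : Fin 3 → ℝ) : ℝ :=
  1 / 2 * (Real.exp (h 0) - Real.exp (h 1 + h 2)) ^ 2 +
    1 / 2 * (Real.exp (h 1) - Real.exp (h 0 + h 2)) ^ 2 +
    1 / 2 * (Real.exp (h 2) - Real.exp (h 0 + h 1)) ^ 2

noncomputable def gS (x : ℝ) : ℝ := 2 * Real.sinh x ^ 2

lemma gS_deriv : deriv gS = fun x => 4 * Real.sinh x * Real.cosh x := by
  funext x
  have h : HasDerivAt gS (4 * Real.sinh x * Real.cosh x) x := by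
    have := ((Real.hasDerivAt_sinh x).fun_pow 2).const_mul (2:ℝ)
    unfold gS
    exact this.congr_deriv (by norm_num; ring)
  exact h.deriv

lemma gS_strict : StrictConvexOn ℝ Set.univ gS := by
  apply strictConvexOn_of_deriv2_pos convex_univ
  · exact (by unfold gS; fun_prop : Continuous gS).continuousOn
  · intro x _
    have h2 : deriv (deriv gS) x = 4 * Real.cosh x * Real.cosh x + 4 * Real.sinh x * Real.sinh x := by
      rw [gS_deriv]
      have h : HasDerivAt (fun x => 4 * Real.sinh x * Real.cosh x)
          (4 * Real.cosh x * Real.cosh x + 4 * Real.sinh x * Real.sinh x) x := by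
        have := ((Real.hasDerivAt_sinh x).const_mul (4:ℝ)).fun_mul (Real.hasDerivAt_cosh x)
        convert this using 1
      exact h.deriv
    simp only [Function.iterate_succ, Function.iterate_zero, Function.comp_apply, id_eq]
    rw [h2]
    nlinarith [Real.cosh_pos x, sq_nonneg (Real.sinh x)]

/-- Imposing incompressibility `h₃ = -h₁ - h₂`, the reduced energy equals
`2 sinh²h₁ + 2 sinh²h₂ + 2 sinh²(h₁ + h₂)`, which is strictly convex on ℝ². -/
theorem whatMielke_reduced_strictConvex :
    (∀ h₁ h₂ : ℝ, WhatMielke ![h₁, h₂, -h₁ - h₂] =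
        2 * Real.sinh h₁ ^ 2 + 2 * Real.sinh h₂ ^ 2 + 2 * Real.sinh (h₁ + h₂) ^ 2) ∧
      StrictConvexOn ℝ Set.univ (fun p : ℝ × ℝ =>
        2 * Real.sinh p.1 ^ 2 + 2 * Real.sinh p.2 ^ 2 + 2 * Real.sinh (p.1 + p.2) ^ 2) := by
  constructor
  · intro h₁ h₂
    have e1 : h₂ + (-h₁ - h₂) = -h₁ := by ring
    have e2 : h₁ + (-h₁ - h₂) = -h₂ := by ring
    simp only [WhatMielke, Matrix.cons_val_zero, Matrix.cons_val_one, Matrix.head_cons,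
      Matrix.cons_val_two, Matrix.tail_cons, e1, e2, Real.sinh_eq]
    rw [show -h₁ - h₂ = -(h₁ + h₂) by ring]
    ring
  · constructor
    · exact convex_univ
    · intro p _ q _ hpq a b ha hb hab
      have hle : ∀ x y : ℝ, gS (a * x + b * y) ≤ a * gS x + b * gS y := fun x y =>
        gS_strict.convexOn.2 (Set.mem_univ x) (Set.mem_univ y) ha.le hb.le hab
      have hlt : ∀ x y : ℝ, x ≠ y → gS (a * x + b * y) < a * gS x + b * gS y := fun x y h =>
        gS_strict.2 (Set.mem_univ x) (Set.mem_univ y) h ha hb hab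
      have hsum : (a • p + b • q).1 + (a • p + b • q).2
          = a * (p.1 + p.2) + b * (q.1 + q.2) := by
        simp [Prod.smul_def, smul_eq_mul]; ring
      show 2 * Real.sinh (a • p + b • q).1 ^ 2 + 2 * Real.sinh (a • p + b • q).2 ^ 2 +
          2 * Real.sinh ((a • p + b • q).1 + (a • p + b • q).2) ^ 2 <
        a * (2 * Real.sinh p.1 ^ 2 + 2 * Real.sinh p.2 ^ 2 + 2 * Real.sinh (p.1 + p.2) ^ 2) +
        b * (2 * Real.sinh q.1 ^ 2 + 2 * Real.sinh q.2 ^ 2 + 2 * Real.sinh (q.1 + q.2) ^ 2)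
      have h1 : (a • p + b • q).1 = a * p.1 + b * q.1 := by
        simp [Prod.smul_def, smul_eq_mul]
      have h2 : (a • p + b • q).2 = a * p.2 + b * q.2 := by
        simp [Prod.smul_def, smul_eq_mul]
      simp only [h1, h2, hsum]
      have key : gS (a * p.1 + b * q.1) + gS (a * p.2 + b * q.2) +
          gS (a * (p.1 + p.2) + b * (q.1 + q.2)) <
          a * (gS p.1 + gS p.2 + gS (p.1 + p.2)) + b * (gS q.1 + gS q.2 + gS (q.1 + q.2)) := by
        rcases eq_or_ne p.1 q.1 with hx | hx
        · have hy : p.2 ≠ q.2 := fun hy => hpq (Prod.ext hx hy)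
          have := hlt _ _ hy
          have h3 := hle (p.1 + p.2) (q.1 + q.2)
          have h4 := hle p.1 q.1
          linarith
        · have := hlt _ _ hx
          have h3 := hle (p.1 + p.2) (q.1 + q.2)
          have h4 := hle p.2 q.2
          linarith
      rw [show a * p.1 + b * q.1 + (a * p.2 + b * q.2)
          = a * (p.1 + p.2) + b * (q.1 + q.2) from by ring]
      simpa only [gS] using key
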